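/- Let q be a real N×C matrix, k, v real M×C matrices, Φq a real N×R matrix, Φk a real M×R matrix, and C > 0. Define the bias b = Φq·Φkᵀ ∈ ℝ^{N×M}, and for any real N×M matrix A define softmax(A) ∈ ℝ^{N×M} row-wise by softmax(A)_{ij} = exp(A_{ij}) / Σ_{l=1}^{M} exp(A_{il}). Then the attention-with-bias output equals the FlashBias output: softmax(q·kᵀ/√C + b)·v = softmax((1/√C)·[q | √C·Φq]·[k | Φk]ᵀ)·v, where [· | ·] denotes horizontal concatenation along the channel dimension. -/

import Mathlib

open Matrix

/-- Equation 3 of FlashBias: when the bias factors as `b = Φq·Φkᵀ`, attention with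
bias equals FlashBias's attention on the concatenated queries `[q | √C·Φq]` and
keys `[k | Φk]`, where `softmax` is applied row-wise. -/
theorem flashbias_attention_exact
    (N M C R : ℕ) (hC : 0 < C)
    (q : Matrix (Fin N) (Fin C) ℝ) (k v : Matrix (Fin M) (Fin C) ℝ)
    (Φq : Matrix (Fin N) (Fin R) ℝ) (Φk : Matrix (Fin M) (Fin R) ℝ)
    (b : Matrix (Fin N) (Fin M) ℝ) (hb : b = Φq * Φkᵀ)
    (softmax : Matrix (Fin N) (Fin M) ℝ → Matrix (Fin N) (Fin M) ℝ)
    (hsoftmax : ∀ A i j,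
      softmax A i j = Real.exp (A i j) / ∑ l, Real.exp (A i l)) :
    softmax ((1 / Real.sqrt C) • (q * kᵀ) + b) * v =
      softmax ((1 / Real.sqrt C) •
        (fromCols q (Real.sqrt C • Φq) * (fromCols k Φk)ᵀ)) * v := by
  have hs : (0:ℝ) < Real.sqrt C := Real.sqrt_pos.mpr (by exact_mod_cast hC)
  congr 1
  congr 1
  rw [transpose_fromCols, fromCols_mul_fromRows, hb, smul_add, smul_mul,
    smul_smul, one_div, inv_mul_cancel₀ hs.ne', one_smul]
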